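/- Let D be a connected finite graph and let F, G be two maximal nested sets on D. Then the connected components of the union of all subdiagrams B belonging to the symmetric difference F Δ G are exactly the maximal unsaturated elements of F ∩ G, where C ∈ F ∩ G is unsaturated if n(C; F∩G) ≥ 2. -/

import Mathlib

open scoped Classical

section NestedSets

variable {V : Type*} [Fintype V] [DecidableEq V]

/-- The (induced subgraph on the) finite vertex set `B` is connected (in particular nonempty). -/
def Conn (G : SimpleGraph V) (B : Finset V) : Prop :=
  (G.induce (B : Set V)).Connected

/-- Two vertex sets are orthogonal: no edge of `G` joins a vertex of one to a vertex
of the other. -/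
def Orth (G : SimpleGraph V) (B C : Finset V) : Prop :=
  ∀ a ∈ B, ∀ b ∈ C, ¬ G.Adj a b

/-- Two subdiagrams are compatible if one contains the other or they are orthogonal. -/
def Compat (G : SimpleGraph V) (B C : Finset V) : Prop :=
  B ⊆ C ∨ C ⊆ B ∨ Orth G B C

/-- A nested set on the (connected) diagram `D` with vertex set `V`: a collection of
pairwise compatible connected subdiagrams containing `D` itself. -/
def Nested (G : SimpleGraph V) (H : Finset (Finset V)) : Prop :=
  Finset.univ ∈ H ∧ (∀ B ∈ H, Conn G B) ∧ ∀ B ∈ H, ∀ C ∈ H, Compat G B C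

/-- `iN H B` is the union of the elements of `H` strictly contained in `B`;
this coincides with the union of the *maximal* elements of `H` strictly contained in `B`. -/
noncomputable def iN (H : Finset (Finset V)) (B : Finset V) : Finset V :=
  (H.filter fun C => C ⊂ B).sup id

/-- `nN H B = n(B;H)` is the number of vertices of `B` not covered by the maximal
elements of `H` strictly contained in `B`. -/
noncomputable def nN (H : Finset (Finset V)) (B : Finset V) : ℕ :=
  (B \ iN H B).card

/-- `C` is a connected component of (the induced subgraph on) `S`. -/
def IsCC (G : SimpleGraph V) (S C : Finset V) : Prop :=
  C ⊆ S ∧ Conn G C ∧ ∀ C', C ⊆ C' → C' ⊆ S → Conn G C' → C' = C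

/-- A maximal nested set on `D`. -/
def MaxNested (G : SimpleGraph V) (F : Finset (Finset V)) : Prop :=
  Nested G F ∧ ∀ K, Nested G K → F ⊆ K → K = F

end NestedSets


/-!
In a maximal nested set every element `C` has exactly one vertex `x` outside its proper
sub-elements, and every connected component of `C - x` belongs to the set (it is compatible with
everything, so maximality absorbs it).

If `B ∈ F \ G` and `C` is a minimal element of `F ∩ G` containing `B`, then `C` is unsaturated:
otherwise its single free vertex in `F ∩ G` is also the free vertex of `C` in `G`, and `B` would be
compatible with every element of `G`. Conversely, if `C ∈ F ∩ G` is unsaturated, the free vertices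
`x` (in `F`) and `y` (in `G`) of `C` differ. If some `v ∈ C` lay in no element of `F Δ G`, the
components of `C - x` and `C - y` through `v` would both lie in `F ∩ G`, hence coincide, and so be
closed under adjacency inside the connected set `C`, which is absurd. Finally, distinct maximal
unsaturated elements are orthogonal, so they are the components of their union.
-/

section Connectivity

variable {V : Type*} {G : SimpleGraph V} {A B C D S : Finset V} {u v w : V}

lemma Conn.nonempty (h : Conn G A) : A.Nonempty := by
  obtain ⟨⟨v, hv⟩⟩ := SimpleGraph.Connected.nonempty h
  exact ⟨v, hv⟩

lemma conn_singleton (v : V) : Conn G {v} := by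
  rw [Conn, Finset.coe_singleton, SimpleGraph.induce_singleton_eq_top]
  exact SimpleGraph.connected_top

lemma Conn.union [DecidableEq V] (hA : Conn G A) (hB : Conn G B) (h : (A ∩ B).Nonempty) :
    Conn G (A ∪ B) := by
  rw [Conn, Finset.coe_union]
  exact SimpleGraph.induce_union_connected hA.preconnected hB.preconnected (by exact_mod_cast h)

lemma Conn.insert [DecidableEq V] (hA : Conn G A) (hu : u ∈ A) (huw : G.Adj u w) :
    Conn G (insert w A) := by
  rw [Conn, Finset.coe_insert, Set.insert_eq, Set.union_comm]
  have hw : Conn G {w} := conn_singleton w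
  rw [Conn, Finset.coe_singleton] at hw
  exact SimpleGraph.connected_induce_union hA.preconnected hw.preconnected hu rfl huw

lemma Conn.subset_of_closed (hA : Conn G A) (hvA : v ∈ A) (hvD : v ∈ D)
    (hD : ∀ u ∈ A, ∀ w ∈ A, u ∈ D → G.Adj u w → w ∈ D) : A ⊆ D := by
  intro w hwA
  by_contra hwD
  obtain ⟨p⟩ := hA.preconnected ⟨v, hvA⟩ ⟨w, hwA⟩
  obtain ⟨d, -, hd₁, hd₂⟩ := p.exists_boundary_dart {x | x.1 ∈ D} hvD hwD
  exact hd₂ (hD _ d.fst.2 _ d.snd.2 hd₁ d.adj)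

lemma Orth.symm (h : Orth G A B) : Orth G B A :=
  fun b hb a ha hba => h a ha b hb hba.symm

lemma Orth.mono (h : Orth G A B) (hCA : C ⊆ A) (hDB : D ⊆ B) : Orth G C D :=
  fun c hc d hd => h c (hCA hc) d (hDB hd)

lemma Compat.symm (h : Compat G A B) : Compat G B A := by
  rcases h with h | h | h
  exacts [Or.inr (Or.inl h), Or.inl h, Or.inr (Or.inr h.symm)]

lemma Orth.eq_singleton_of_mem (h : Orth G A B) (hA : Conn G A) (hvA : v ∈ A) (hvB : v ∈ B) :
    A = {v} := by
  refine Finset.Subset.antisymm ?_ (Finset.singleton_subset_iff.2 hvA)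
  refine hA.subset_of_closed hvA (Finset.mem_singleton_self v) fun u _ w hw hu huw => ?_
  rw [Finset.mem_singleton] at hu
  exact absurd (hu ▸ huw).symm (h w hw v hvB)

lemma Orth.eq_of_mem (h : Orth G A B) (hA : Conn G A) (hB : Conn G B) (hvA : v ∈ A)
    (hvB : v ∈ B) : A = B := by
  rw [h.eq_singleton_of_mem hA hvA hvB, h.symm.eq_singleton_of_mem hB hvB hvA]

/-- A largest member of `Q` meeting `A` is closed under adjacency inside `A`. -/
lemma Conn.exists_subset_of_compat {Q : Finset (Finset V)} (hA : Conn G A)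
    (hQ : ∀ B ∈ Q, ∀ C ∈ Q, Compat G B C) (hcover : ∀ a ∈ A, ∃ B ∈ Q, a ∈ B) :
    ∃ B ∈ Q, A ⊆ B := by
  obtain ⟨a, ha⟩ := hA.nonempty
  obtain ⟨B₀, hB₀, haB₀⟩ := hcover a ha
  obtain ⟨B, -, hB⟩ := (Q.filter fun B => ∃ a ∈ A, a ∈ B).exists_le_maximal
    (Finset.mem_filter.2 ⟨hB₀, a, ha, haB₀⟩)
  obtain ⟨hBQ, b, hbA, hbB⟩ := Finset.mem_filter.1 hB.prop
  refine ⟨B, hBQ, hA.subset_of_closed hbA hbB fun u _ w hwA huB huw => ?_⟩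
  obtain ⟨B', hB'Q, hwB'⟩ := hcover w hwA
  rcases hQ B hBQ B' hB'Q with hBB' | hB'B | hBB'
  · rw [hB.eq_of_le (Finset.mem_filter.2 ⟨hB'Q, w, hwA, hwB'⟩) hBB']
    exact hwB'
  · exact hB'B hwB'
  · exact absurd huw (hBB' u huB w hwB')

end Connectivity

section Components

variable {V : Type*} [DecidableEq V] {G : SimpleGraph V} {A C S : Finset V} {u v w x y : V}

lemma exists_isCC (hv : v ∈ S) : ∃ C, IsCC G S C ∧ v ∈ C := by
  obtain ⟨C, -, hCmax⟩ := (S.powerset.filter fun C => Conn G C ∧ v ∈ C).exists_le_maximal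
    (Finset.mem_filter.2 ⟨Finset.singleton_subset_iff.2 hv |> Finset.mem_powerset.2,
      conn_singleton v, Finset.mem_singleton_self v⟩)
  obtain ⟨hCS, hC, hvC⟩ := Finset.mem_filter.1 hCmax.prop
  refine ⟨C, ⟨Finset.mem_powerset.1 hCS, hC, fun C' hCC' hC'S hC' => ?_⟩, hvC⟩
  exact (hCmax.eq_of_le (Finset.mem_filter.2 ⟨Finset.mem_powerset.2 hC'S, hC', hCC' hvC⟩) hCC').symm

lemma IsCC.subset_of_conn (hC : IsCC G S C) (hA : Conn G A) (hAS : A ⊆ S)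
    (hAC : (A ∩ C).Nonempty) : A ⊆ C := by
  have := hC.2.2 (A ∪ C) Finset.subset_union_right (Finset.union_subset hAS hC.1)
    (hA.union hC.2.1 hAC)
  exact this ▸ Finset.subset_union_left

lemma IsCC.mem_of_adj (hC : IsCC G S C) (hu : u ∈ C) (hw : w ∈ S) (huw : G.Adj u w) :
    w ∈ C := by
  have := hC.2.2 (insert w C) (Finset.subset_insert w C)
    (Finset.insert_subset hw hC.1) (hC.2.1.insert hu huw)
  exact this ▸ Finset.mem_insert_self w C

lemma Conn.not_isCC_erase_of_isCC_erase (hC : Conn G C) (hx : x ∈ C) (hxy : x ≠ y)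
    (hAy : IsCC G (C.erase y) A) : ¬ IsCC G (C.erase x) A := by
  intro hAx
  obtain ⟨v, hv⟩ := hAx.2.1.nonempty
  have hCA : C ⊆ A := hC.subset_of_closed (Finset.mem_of_mem_erase (hAx.1 hv)) hv
    fun u _ w hw huA huw => by
      by_cases hwx : w = x
      · exact hAy.mem_of_adj huA (Finset.mem_erase.2 ⟨hwx ▸ hxy, hw⟩) huw
      · exact hAx.mem_of_adj huA (Finset.mem_erase.2 ⟨hwx, hw⟩) huw
  exact (Finset.mem_erase.1 (hAx.1 (hCA hx))).1 rfl

lemma IsCC.compat (hC : IsCC G S C) (hA : Conn G A) (hAS : A ⊆ S) : Compat G C A := by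
  by_cases hAC : (A ∩ C).Nonempty
  · exact Or.inr (Or.inl (hC.subset_of_conn hA hAS hAC))
  · refine Or.inr (Or.inr fun c hc a ha hca => hAC ⟨a, Finset.mem_inter.2 ⟨ha, ?_⟩⟩)
    exact hC.mem_of_adj hc (hAS ha) hca

lemma isCC_sup_iff {P : Finset (Finset V)} (hP : ∀ D ∈ P, Conn G D)
    (horth : ∀ D ∈ P, ∀ D' ∈ P, D ≠ D' → Orth G D D') : IsCC G (P.sup id) C ↔ C ∈ P := by
  have hcompat : ∀ D ∈ P, ∀ D' ∈ P, Compat G D D' := fun D hD D' hD' => by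
    by_cases h : D = D'
    · exact Or.inl h.le
    · exact Or.inr (Or.inr (horth D hD D' hD' h))
  have hcover : ∀ A ⊆ P.sup id, ∀ a ∈ A, ∃ D ∈ P, a ∈ D := fun A hA a ha =>
    Finset.mem_sup.1 (hA ha)
  constructor
  · rintro ⟨hCS, hC, hmax⟩
    obtain ⟨D, hD, hCD⟩ := hC.exists_subset_of_compat hcompat (hcover C hCS)
    exact hmax D hCD (Finset.le_sup (f := id) hD) (hP D hD) ▸ hD
  · intro hCP
    refine ⟨Finset.le_sup (f := id) hCP, hP C hCP, fun C' hCC' hC'S hC' => ?_⟩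
    obtain ⟨D, hD, hC'D⟩ := hC'.exists_subset_of_compat hcompat (hcover C' hC'S)
    obtain ⟨v, hv⟩ := (hP C hCP).nonempty
    have hDC : D = C := by
      by_contra hne
      exact hne ((horth D hD C hCP hne).eq_of_mem (hP D hD) (hP C hCP) (hC'D (hCC' hv)) hv)
    exact Finset.Subset.antisymm (hDC ▸ hC'D) hCC'

end Components

section Interior

variable {V : Type*} [DecidableEq V] {G : SimpleGraph V} {F Gs H K : Finset (Finset V)}
  {Ax Ay B C : Finset V} {v x y : V}

lemma mem_iN : v ∈ iN H C ↔ ∃ B ∈ H, B ⊂ C ∧ v ∈ B := by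
  simp only [iN, Finset.mem_sup, Finset.mem_filter, id, and_assoc]

lemma iN_mono (h : H ⊆ K) : iN H C ⊆ iN K C := fun _ hv =>
  let ⟨B, hB, hBC, hvB⟩ := mem_iN.1 hv
  mem_iN.2 ⟨B, h hB, hBC, hvB⟩

lemma notMem_of_mem_sdiff_iN (hv : v ∈ C \ iN H C) (hB : B ∈ H) (hBC : B ⊂ C) : v ∉ B :=
  fun hvB => (Finset.mem_sdiff.1 hv).2 (mem_iN.2 ⟨B, hB, hBC, hvB⟩)

lemma isCC_erase_eq_of_mem (hx : x ∈ C \ iN F C) (hy : y ∈ C \ iN Gs C)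
    (hAx : IsCC G (C.erase x) Ax) (hAy : IsCC G (C.erase y) Ay) (hAxGs : Ax ∈ Gs) (hAyF : Ay ∈ F)
    (hvAx : v ∈ Ax) (hvAy : v ∈ Ay) : Ax = Ay := by
  have hAxC : Ax ⊂ C := hAx.1.trans_ssubset (Finset.erase_ssubset (Finset.mem_sdiff.1 hx).1)
  have hAyC : Ay ⊂ C := hAy.1.trans_ssubset (Finset.erase_ssubset (Finset.mem_sdiff.1 hy).1)
  refine Finset.Subset.antisymm ?_ ?_
  · exact hAy.subset_of_conn hAx.2.1
      (Finset.subset_erase.2 ⟨hAxC.subset, notMem_of_mem_sdiff_iN hy hAxGs hAxC⟩)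
      ⟨v, Finset.mem_inter.2 ⟨hvAx, hvAy⟩⟩
  · exact hAx.subset_of_conn hAy.2.1
      (Finset.subset_erase.2 ⟨hAyC.subset, notMem_of_mem_sdiff_iN hx hAyF hAyC⟩)
      ⟨v, Finset.mem_inter.2 ⟨hvAy, hvAx⟩⟩

end Interior

section NestedSets

variable {V : Type*} [Fintype V] [DecidableEq V] {G : SimpleGraph V}
  {F Gs H K : Finset (Finset V)} {A B C E : Finset V} {v x y : V}

lemma Nested.inter (hF : Nested G F) (hGs : Nested G Gs) : Nested G (F ∩ Gs) :=
  ⟨Finset.mem_inter.2 ⟨hF.1, hGs.1⟩, fun B hB => hF.2.1 B (Finset.mem_inter.1 hB).1,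
    fun B hB C hC => hF.2.2 B (Finset.mem_inter.1 hB).1 C (Finset.mem_inter.1 hC).1⟩

lemma MaxNested.mem_of_compat (hF : MaxNested G F) (hA : Conn G A)
    (hcompat : ∀ B ∈ F, Compat G A B) : A ∈ F := by
  have hnested : Nested G (insert A F) := by
    refine ⟨Finset.mem_insert_of_mem hF.1.1, ?_, ?_⟩
    · intro B hB
      rcases Finset.mem_insert.1 hB with rfl | hB
      exacts [hA, hF.1.2.1 B hB]
    · intro B hB C hC
      rcases Finset.mem_insert.1 hB with rfl | hBF <;> rcases Finset.mem_insert.1 hC with rfl | hCF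
      exacts [Or.inl le_rfl, hcompat C hCF, (hcompat B hBF).symm, hF.1.2.2 B hBF C hCF]
  exact hF.2 _ hnested (Finset.subset_insert A F) ▸ Finset.mem_insert_self A F

lemma Nested.exists_ssubset_of_subset_iN (hH : Nested G H) (hE : Conn G E)
    (hEC : E ⊆ iN H C) : ∃ D ∈ H, D ⊂ C ∧ E ⊆ D := by
  obtain ⟨D, hD, hED⟩ := hE.exists_subset_of_compat (Q := H.filter (· ⊂ C))
    (fun B hB D hD => hH.2.2 B (Finset.mem_filter.1 hB).1 D (Finset.mem_filter.1 hD).1)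
    (fun a ha => let ⟨B, hB, hBC, haB⟩ := mem_iN.1 (hEC ha)
      ⟨B, Finset.mem_filter.2 ⟨hB, hBC⟩, haB⟩)
  exact ⟨D, (Finset.mem_filter.1 hD).1, (Finset.mem_filter.1 hD).2, hED⟩

lemma Nested.sdiff_iN_nonempty (hH : Nested G H) (hC : C ∈ H) : (C \ iN H C).Nonempty := by
  rw [Finset.sdiff_nonempty]
  intro hCC
  obtain ⟨D, -, hDC, hCD⟩ := hH.exists_ssubset_of_subset_iN (hH.2.1 C hC) hCC
  exact hDC.not_subset hCD

lemma Nested.exists_ssubset_of_nN_le_one (hK : Nested G K) (hsat : nN K C ≤ 1)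
    (hy : y ∈ C \ iN K C) (hE : Conn G E) (hEC : E ⊆ C) (hyE : y ∉ E) :
    ∃ D ∈ K, D ⊂ C ∧ E ⊆ D := by
  refine hK.exists_ssubset_of_subset_iN hE fun w hw => ?_
  by_contra hwK
  exact hyE (Finset.card_le_one.1 hsat w (Finset.mem_sdiff.2 ⟨hEC hw, hwK⟩) y hy ▸ hw)

lemma MaxNested.mem_of_isCC_erase (hF : MaxNested G F) (hC : C ∈ F) (hx : x ∈ C \ iN F C)
    (hA : IsCC G (C.erase x) A) : A ∈ F := by
  have hAC : A ⊆ C := hA.1.trans (Finset.erase_subset x C)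
  refine hF.mem_of_compat hA.2.1 fun B hB => ?_
  rcases hF.1.2.2 C hC B hB with hCB | hBC | hCB
  · exact Or.inl (hAC.trans hCB)
  · rcases hBC.eq_or_ssubset with rfl | hBC
    · exact Or.inl hAC
    · exact hA.compat (hF.1.2.1 B hB)
        (Finset.subset_erase.2 ⟨hBC.subset, notMem_of_mem_sdiff_iN hx hB hBC⟩)
  · exact Or.inr (Or.inr (hCB.mono hAC le_rfl))

lemma MaxNested.mem_iN_of_ne (hF : MaxNested G F) (hC : C ∈ F) (hx : x ∈ C \ iN F C)
    (hy : y ∈ C) (hyx : y ≠ x) : y ∈ iN F C := by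
  obtain ⟨A, hA, hyA⟩ := exists_isCC (G := G) (Finset.mem_erase.2 ⟨hyx, hy⟩)
  exact mem_iN.2 ⟨A, hF.mem_of_isCC_erase hC hx hA,
    hA.1.trans_ssubset (Finset.erase_ssubset (Finset.mem_sdiff.1 hx).1), hyA⟩

end NestedSets

section SymmDiff

variable {V : Type*} [Fintype V] [DecidableEq V] {G : SimpleGraph V}
  {F Gs : Finset (Finset V)} {B C : Finset V} {v : V}

lemma exists_unsaturated_superset (hF : MaxNested G F) (hGs : MaxNested G Gs) (hBF : B ∈ F)
    (hBGs : B ∉ Gs) : ∃ C ∈ F ∩ Gs, B ⊆ C ∧ 2 ≤ nN (F ∩ Gs) C := by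
  set K := F ∩ Gs
  have hK : Nested G K := hF.1.inter hGs.1
  obtain ⟨C, hCmin⟩ := (K.filter (B ⊆ ·)).exists_minimal
    ⟨Finset.univ, Finset.mem_filter.2 ⟨hK.1, Finset.subset_univ B⟩⟩
  obtain ⟨hCK, hBC⟩ := Finset.mem_filter.1 hCmin.prop
  have hCGs : C ∈ Gs := (Finset.mem_inter.1 hCK).2
  have hmin : ∀ D ∈ K, D ⊂ C → ¬ B ⊆ D := fun D hD hDC hBD =>
    hCmin.not_lt (Finset.mem_filter.2 ⟨hD, hBD⟩) hDC
  refine ⟨C, hCK, hBC, ?_⟩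
  by_contra! hsat
  obtain ⟨y, hy⟩ := hGs.1.sdiff_iN_nonempty hCGs
  have hyK : y ∈ C \ iN K C :=
    Finset.sdiff_subset_sdiff le_rfl (iN_mono Finset.inter_subset_right) hy
  have hcover {E : Finset V} (hE : Conn G E) (hEC : E ⊆ C) (hyE : y ∉ E) :
      ∃ D ∈ K, D ⊂ C ∧ E ⊆ D :=
    hK.exists_ssubset_of_nN_le_one (Nat.lt_succ_iff.1 hsat) hyK hE hEC hyE
  by_cases hyB : y ∈ B
  · refine hBGs (hGs.mem_of_compat (hF.1.2.1 B hBF) fun E hE => ?_)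
    rcases hGs.1.2.2 C hCGs E hE with hCE | hEC | hCE
    · exact Or.inl (hBC.trans hCE)
    · rcases hEC.eq_or_ssubset with rfl | hEC
      · exact Or.inl hBC
      obtain ⟨D, hDK, hDC, hED⟩ :=
        hcover (hGs.1.2.1 E hE) hEC.subset (notMem_of_mem_sdiff_iN hy hE hEC)
      rcases hF.1.2.2 B hBF D (Finset.mem_inter.1 hDK).1 with hBD | hDB | hBD
      · exact absurd hBD (hmin D hDK hDC)
      · exact Or.inr (Or.inl (hED.trans hDB))
      · exact Or.inr (Or.inr (hBD.mono le_rfl hED))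
    · exact Or.inr (Or.inr (hCE.mono hBC le_rfl))
  · obtain ⟨D, hDK, hDC, hBD⟩ := hcover (hF.1.2.1 B hBF) hBC hyB
    exact hmin D hDK hDC hBD

lemma exists_mem_sdiff_of_free (hGs : MaxNested G Gs) (hCGs : C ∈ Gs) {x y : V}
    (hx : x ∈ C \ iN F C) (hy : y ∈ C \ iN Gs C) (hxy : x ≠ y) : ∃ E ∈ Gs \ F, x ∈ E := by
  obtain ⟨E, hE, hEC, hxE⟩ := mem_iN.1 (hGs.mem_iN_of_ne hCGs hy (Finset.mem_sdiff.1 hx).1 hxy)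
  exact ⟨E, Finset.mem_sdiff.2 ⟨hE, fun hEF => notMem_of_mem_sdiff_iN hx hEF hEC hxE⟩, hxE⟩

lemma nN_inter_le_one_of_common_free (hF : MaxNested G F) (hGs : MaxNested G Gs) (hCF : C ∈ F)
    (hCGs : C ∈ Gs) {x : V} (hxF : x ∈ C \ iN F C) (hxGs : x ∈ C \ iN Gs C) :
    nN (F ∩ Gs) C ≤ 1 := by
  refine (Finset.card_le_card (t := {x}) fun w hw => ?_).trans (Finset.card_singleton x).le
  obtain ⟨hwC, hwK⟩ := Finset.mem_sdiff.1 hw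
  rw [Finset.mem_singleton]
  by_contra hwx
  obtain ⟨A, hA, hwA⟩ := exists_isCC (G := G) (Finset.mem_erase.2 ⟨hwx, hwC⟩)
  exact hwK (mem_iN.2 ⟨A, Finset.mem_inter.2
    ⟨hF.mem_of_isCC_erase hCF hxF hA, hGs.mem_of_isCC_erase hCGs hxGs hA⟩,
    hA.1.trans_ssubset (Finset.erase_ssubset (Finset.mem_sdiff.1 hxF).1), hwA⟩)

lemma exists_mem_symmDiff_of_unsaturated (hF : MaxNested G F) (hGs : MaxNested G Gs)
    (hCK : C ∈ F ∩ Gs) (hC : 2 ≤ nN (F ∩ Gs) C) (hv : v ∈ C) :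
    ∃ B ∈ (F \ Gs) ∪ (Gs \ F), v ∈ B := by
  obtain ⟨hCF, hCGs⟩ := Finset.mem_inter.1 hCK
  obtain ⟨x, hx⟩ := hF.1.sdiff_iN_nonempty hCF
  obtain ⟨y, hy⟩ := hGs.1.sdiff_iN_nonempty hCGs
  have hxy : x ≠ y := by
    rintro rfl
    exact absurd (nN_inter_le_one_of_common_free hF hGs hCF hCGs hx hy) (by omega)
  by_cases hvx : v = x
  · obtain ⟨E, hE, hvE⟩ := exists_mem_sdiff_of_free hGs hCGs (hvx ▸ hx) hy (hvx ▸ hxy)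
    exact ⟨E, Finset.mem_union_right _ hE, hvE⟩
  by_cases hvy : v = y
  · obtain ⟨E, hE, hvE⟩ := exists_mem_sdiff_of_free hF hCF (hvy ▸ hy) hx (hvy ▸ hxy.symm)
    exact ⟨E, Finset.mem_union_left _ hE, hvE⟩
  obtain ⟨Ax, hAx, hvAx⟩ := exists_isCC (G := G) (Finset.mem_erase.2 ⟨hvx, hv⟩)
  obtain ⟨Ay, hAy, hvAy⟩ := exists_isCC (G := G) (Finset.mem_erase.2 ⟨hvy, hv⟩)
  by_cases hAxGs : Ax ∈ Gs
  · by_cases hAyF : Ay ∈ F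
    · have hAxy := isCC_erase_eq_of_mem hx hy hAx hAy hAxGs hAyF hvAx hvAy
      exact absurd hAx ((hF.1.2.1 C hCF).not_isCC_erase_of_isCC_erase
        (Finset.mem_sdiff.1 hx).1 hxy (hAxy ▸ hAy))
    · exact ⟨Ay, Finset.mem_union_right _
        (Finset.mem_sdiff.2 ⟨hGs.mem_of_isCC_erase hCGs hy hAy, hAyF⟩), hvAy⟩
  · exact ⟨Ax, Finset.mem_union_left _
      (Finset.mem_sdiff.2 ⟨hF.mem_of_isCC_erase hCF hx hAx, hAxGs⟩), hvAx⟩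

end SymmDiff

section MaxUnsaturated

variable {V : Type*} [DecidableEq V] {G : SimpleGraph V} {K : Finset (Finset V)}
  {C C' : Finset V}

noncomputable def maxUnsaturated (K : Finset (Finset V)) : Finset (Finset V) :=
  K.filter fun C => 2 ≤ nN K C ∧ ∀ C' ∈ K, 2 ≤ nN K C' → ¬ C ⊂ C'

lemma mem_maxUnsaturated :
    C ∈ maxUnsaturated K ↔ C ∈ K ∧ 2 ≤ nN K C ∧ ∀ C' ∈ K, 2 ≤ nN K C' → ¬ C ⊂ C' :=
  Finset.mem_filter

lemma exists_maxUnsaturated_superset (hC : C ∈ K) (hCu : 2 ≤ nN K C) :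
    ∃ C' ∈ maxUnsaturated K, C ⊆ C' := by
  obtain ⟨C', hCC', hC'max⟩ := (K.filter (2 ≤ nN K ·)).exists_le_maximal
    (Finset.mem_filter.2 ⟨hC, hCu⟩)
  obtain ⟨hC'K, hC'u⟩ := Finset.mem_filter.1 hC'max.prop
  exact ⟨C', mem_maxUnsaturated.2 ⟨hC'K, hC'u, fun D hD hDu =>
    hC'max.not_gt (Finset.mem_filter.2 ⟨hD, hDu⟩)⟩, hCC'⟩

lemma Nested.orth_of_mem_maxUnsaturated [Fintype V] (hK : Nested G K) (hC : C ∈ maxUnsaturated K)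
    (hC' : C' ∈ maxUnsaturated K) (hne : C ≠ C') : Orth G C C' := by
  obtain ⟨hCK, hCu, hCmax⟩ := mem_maxUnsaturated.1 hC
  obtain ⟨hC'K, hC'u, hC'max⟩ := mem_maxUnsaturated.1 hC'
  rcases hK.2.2 C hCK C' hC'K with h | h | h
  · exact absurd (Finset.ssubset_iff_subset_ne.2 ⟨h, hne⟩) (hCmax C' hC'K hC'u)
  · exact absurd (Finset.ssubset_iff_subset_ne.2 ⟨h, hne.symm⟩) (hC'max C hCK hCu)
  · exact h

lemma sup_symmDiff_eq_sup_maxUnsaturated [Fintype V] {F Gs : Finset (Finset V)} (hF : MaxNested G F)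
    (hGs : MaxNested G Gs) :
    ((F \ Gs) ∪ (Gs \ F)).sup id = (maxUnsaturated (F ∩ Gs)).sup id := by
  ext v
  simp only [Finset.mem_sup, id]
  constructor
  · rintro ⟨B, hB, hvB⟩
    obtain ⟨C, hC, hBC, hCu⟩ : ∃ C ∈ F ∩ Gs, B ⊆ C ∧ 2 ≤ nN (F ∩ Gs) C := by
      rcases Finset.mem_union.1 hB with hB | hB <;> obtain ⟨hB, hB'⟩ := Finset.mem_sdiff.1 hB
      · exact exists_unsaturated_superset hF hGs hB hB'
      · simpa only [Finset.inter_comm Gs F] using exists_unsaturated_superset hGs hF hB hB'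
    obtain ⟨C', hC', hCC'⟩ := exists_maxUnsaturated_superset hC hCu
    exact ⟨C', hC', hCC' (hBC hvB)⟩
  · rintro ⟨C, hC, hvC⟩
    obtain ⟨hCK, hCu, -⟩ := mem_maxUnsaturated.1 hC
    exact exists_mem_symmDiff_of_unsaturated hF hGs hCK hCu hvC

end MaxUnsaturated

theorem stmt5_general {V : Type*} [Fintype V] [DecidableEq V]
    (Gr : SimpleGraph V)
    (F Gs : Finset (Finset V)) (hF : MaxNested Gr F) (hGs : MaxNested Gr Gs) :
    ∀ C : Finset V,
      IsCC Gr (((F \ Gs) ∪ (Gs \ F)).sup id) C ↔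
        (C ∈ F ∩ Gs ∧ 2 ≤ nN (F ∩ Gs) C ∧
          ∀ C' ∈ F ∩ Gs, 2 ≤ nN (F ∩ Gs) C' → ¬ C ⊂ C') := by
  intro C
  have hK : Nested Gr (F ∩ Gs) := hF.1.inter hGs.1
  rw [sup_symmDiff_eq_sup_maxUnsaturated hF hGs,
    isCC_sup_iff (fun D hD => hK.2.1 D (mem_maxUnsaturated.1 hD).1)
      (fun D hD D' hD' => hK.orth_of_mem_maxUnsaturated hD hD'),
    mem_maxUnsaturated]

/-- For maximal nested sets `F`, `Gs` on a connected diagram `D`, the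
connected components of the union of the elements of the symmetric difference `F Δ Gs`
are exactly the maximal unsaturated elements of `F ∩ Gs` (an element `C` of `F ∩ Gs`
being unsaturated if `n(C; F ∩ Gs) ≥ 2`). -/
theorem stmt5 {V : Type*} [Fintype V] [DecidableEq V]
    (Gr : SimpleGraph V) (hGr : Gr.Connected)
    (F Gs : Finset (Finset V)) (hF : MaxNested Gr F) (hGs : MaxNested Gr Gs) :
    ∀ C : Finset V,
      IsCC Gr (((F \ Gs) ∪ (Gs \ F)).sup id) C ↔
        (C ∈ F ∩ Gs ∧ 2 ≤ nN (F ∩ Gs) C ∧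
          ∀ C' ∈ F ∩ Gs, 2 ≤ nN (F ∩ Gs) C' → ¬ C ⊂ C') :=
  stmt5_general Gr F Gs hF hGs
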